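/- Andrews–Gessel divisibility lemma: for all natural numbers n and k with 1 ≤ k ≤ n, the rational function C(2n+1,2k)_q · (prod_{i=1}^{k}(1+q^i)) / (prod_{i=n-k+1}^{n}(1+q^i)) is a polynomial in q, where C(2n+1,2k)_q is the Gaussian binomial coefficient. -/

import Mathlib

/-!
Write `n = k + m`. Since `∏_{i ≤ j} (1 + q^i) · ∏_{i ≤ j} (q^i - 1) = ∏_{i ≤ j} (q^{2i} - 1)`, the
quotient is `G(2k+2m+1, 2k) · (-q;q)_k (-q;q)_m / (-q;q)_{k+m}`, and after clearing denominators
the claim becomes a divisibility between two products of polynomials `q^e - 1`. As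
`q^e - 1 = ∏_{d ∣ e} Φ_d`, it suffices that for every `d` the left side has at most as many
exponents divisible by `d` as the right side. These counts are floors `⌊j/d⌋` (or `⌊j/(d/2)⌋` for
the exponents `2i` when `d` is even), and the comparison reduces to `⌊a/d⌋ + ⌊b/d⌋ ≤ ⌊(a+b)/d⌋`.
-/

noncomputable section
open Finset PowerSeries

abbrev Fq : Type := RatFunc ℚ

/-- The variable `q` as element of the field of rational functions `ℚ(q)`. -/
def qv : Fq := RatFunc.X

/-- The q-integer `[m]_q = 1 + q + ... + q^(m-1)`. -/
def qInt (x : Fq) (m : ℕ) : Fq := ∑ i ∈ Finset.range m, x ^ i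

/-- The q-factorial `[m]_q! = [1]_q [2]_q ⋯ [m]_q`. -/
def qFact (x : Fq) (m : ℕ) : Fq := ∏ i ∈ Finset.range m, qInt x (i + 1)

/-- The Gaussian binomial coefficient as a polynomial in `q` (Pascal recursion). -/
def gauss : ℕ → ℕ → Polynomial ℤ
  | _, 0 => 1
  | 0, _ + 1 => 0
  | n + 1, k + 1 => gauss n k + Polynomial.X ^ (k + 1) * gauss n (k + 1)

open Polynomial

/-- `∏_{i=1}^m (q^{ci} - 1)`, that is `(-1)^m (q^c; q^c)_m`. -/
def qPoch (c m : ℕ) : ℤ[X] := ∏ i ∈ Ioc 0 m, (Polynomial.X ^ (c * i) - 1)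

lemma qPoch_zero (c : ℕ) : qPoch c 0 = 1 := by simp [qPoch]

lemma qPoch_succ (c m : ℕ) : qPoch c (m + 1) = qPoch c m * (Polynomial.X ^ (c * (m + 1)) - 1) :=
  prod_Ioc_succ_top (Nat.zero_le m) _

lemma qPoch_ne_zero {c : ℕ} (hc : c ≠ 0) (m : ℕ) : qPoch c m ≠ 0 := by
  refine prod_ne_zero_iff.2 fun i hi => ?_
  have hci : 0 < c * i := Nat.pos_of_ne_zero (mul_ne_zero hc (mem_Ioc.1 hi).1.ne')
  simpa using X_pow_sub_C_ne_zero (R := ℤ) hci 1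

/-- `(-q; q)_m = ∏_{i=1}^m (1 + q^i)`. -/
def negQPoch (m : ℕ) : ℤ[X] := ∏ i ∈ Ioc 0 m, (1 + Polynomial.X ^ i)

lemma negQPoch_mul_qPoch_one (m : ℕ) : negQPoch m * qPoch 1 m = qPoch 2 m := by
  rw [negQPoch, qPoch, qPoch, ← prod_mul_distrib]
  exact prod_congr rfl fun i _ => by ring

lemma gauss_eq_zero_of_lt : ∀ {m j : ℕ}, m < j → gauss m j = 0
  | 0, _ + 1, _ => rfl
  | m + 1, j + 1, h => by
      simp only [gauss, gauss_eq_zero_of_lt (by omega : m < j),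
        gauss_eq_zero_of_lt (by omega : m < j + 1), mul_zero, add_zero]

lemma gauss_self : ∀ m : ℕ, gauss m m = 1
  | 0 => rfl
  | m + 1 => by
      simp only [gauss, gauss_self m, gauss_eq_zero_of_lt m.lt_succ_self, mul_zero, add_zero]

lemma gauss_add_mul_qPoch (a b : ℕ) :
    gauss (a + b) a * qPoch 1 a * qPoch 1 b = qPoch 1 (a + b) := by
  induction a generalizing b with
  | zero => simp [gauss, qPoch_zero]
  | succ a iha =>
    induction b with
    | zero => simp [gauss_self, qPoch_zero]
    | succ b ihb =>
      have h1 := iha (b + 1)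
      rw [show a + (b + 1) = a + b + 1 by ring, qPoch_succ 1 b] at h1
      rw [show a + 1 + b = a + b + 1 by ring, qPoch_succ 1 a] at ihb
      rw [show a + 1 + (b + 1) = a + b + 1 + 1 by ring, gauss, qPoch_succ, qPoch_succ, qPoch_succ]
      linear_combination (Polynomial.X ^ (a + 1) - 1 : ℤ[X]) * h1
        + Polynomial.X ^ (a + 1) * (Polynomial.X ^ (b + 1) - 1) * ihb

section CyclotomicCriterion

variable {R : Type*} [CommRing R]

lemma prod_X_pow_sub_one_eq_prod_cyclotomic {s : Multiset ℕ} (hs : 0 ∉ s) :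
    (s.map fun i => (Polynomial.X ^ i - 1 : R[X])).prod
      = ((s.bind fun i => i.divisors.val).map fun d => cyclotomic d R).prod := by
  rw [Multiset.map_bind, Multiset.prod_bind]
  refine congrArg _ (Multiset.map_congr rfl fun i hi => ?_)
  rw [← prod_cyclotomic_eq_X_pow_sub_one (Nat.pos_of_ne_zero (ne_of_mem_of_not_mem hi hs)),
    Finset.prod_eq_multiset_prod]

lemma count_bind_divisors {s : Multiset ℕ} (hs : 0 ∉ s) (d : ℕ) :
    (s.bind fun i => i.divisors.val).count d = (s.filter (d ∣ ·)).card := by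
  induction s using Multiset.induction_on with
  | empty => simp
  | cons i s ih =>
    have hi : i ≠ 0 := fun h => hs (h ▸ Multiset.mem_cons_self i s)
    rw [Multiset.cons_bind, Multiset.count_add, ih (fun h => hs (Multiset.mem_cons_of_mem h)),
      Multiset.filter_cons, Multiset.count_eq_of_nodup i.divisors.nodup]
    by_cases hd : d ∣ i <;> simp [hd, hi, add_comm]

theorem prod_X_pow_sub_one_dvd {s t : Multiset ℕ}
    (h : ∀ d, (s.filter (d ∣ ·)).card ≤ (t.filter (d ∣ ·)).card) :
    (s.map fun i => (Polynomial.X ^ i - 1 : R[X])).prod ∣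
      (t.map fun i => (Polynomial.X ^ i - 1 : R[X])).prod := by
  by_cases ht : 0 ∈ t
  · rw [Multiset.prod_eq_zero (Multiset.mem_map.2 ⟨0, ht, by simp⟩)]
    exact dvd_zero _
  have hs : 0 ∉ s := by simpa [Multiset.filter_eq', Multiset.count_eq_zero.2 ht] using h 0
  rw [prod_X_pow_sub_one_eq_prod_cyclotomic hs, prod_X_pow_sub_one_eq_prod_cyclotomic ht]
  refine Multiset.prod_dvd_prod_of_le (Multiset.map_le_map (Multiset.le_iff_count.2 fun d => ?_))
  rw [count_bind_divisors hs, count_bind_divisors ht]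
  exact h d

end CyclotomicCriterion

def qExps (c m : ℕ) : Multiset ℕ := (Ioc 0 m).val.map (c * ·)

lemma prod_qExps (c m : ℕ) :
    ((qExps c m).map fun i => (Polynomial.X ^ i - 1 : ℤ[X])).prod = qPoch c m := by
  rw [qExps, Multiset.map_map, qPoch, Finset.prod_eq_multiset_prod]
  rfl

lemma card_filter_dvd_qExps (c d m : ℕ) :
    ((qExps c m).filter (d ∣ ·)).card = #{i ∈ Ioc 0 m | d ∣ c * i} := by
  rw [qExps, Multiset.filter_map, Multiset.card_map]
  rfl

lemma card_filter_dvd_one_mul (d m : ℕ) : #{i ∈ Ioc 0 m | d ∣ 1 * i} = m / d := by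
  simp only [one_mul, Nat.Ioc_filter_dvd_card_eq_div]

lemma card_filter_two_mul_dvd_two_mul (e m : ℕ) : #{i ∈ Ioc 0 m | 2 * e ∣ 2 * i} = m / e := by
  simp only [Nat.mul_dvd_mul_iff_left two_pos, Nat.Ioc_filter_dvd_card_eq_div]

lemma card_filter_dvd_two_mul_of_odd {d : ℕ} (hd : Odd d) (m : ℕ) :
    #{i ∈ Ioc 0 m | d ∣ 2 * i} = m / d := by
  simp only [hd.coprime_two_right.dvd_mul_left, Nat.Ioc_filter_dvd_card_eq_div]

lemma two_mul_add_one_div_two_mul (j e : ℕ) : (2 * j + 1) / (2 * e) = j / e := by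
  rw [← Nat.div_div_eq_div_mul, show (2 * j + 1) / 2 = j by omega]

lemma card_filter_dvd_qExps_le (k m d : ℕ) :
    ((qExps 2 (k + m) + qExps 1 (2 * k) + qExps 1 (2 * m + 1) + qExps 1 k + qExps 1 m).filter
        (d ∣ ·)).card ≤
      ((qExps 1 (2 * (k + m) + 1) + qExps 2 k + qExps 2 m + qExps 1 (k + m)).filter
        (d ∣ ·)).card := by
  simp only [Multiset.filter_add, Multiset.card_add, card_filter_dvd_qExps, card_filter_dvd_one_mul]
  rcases Nat.even_or_odd' d with ⟨e, rfl | rfl⟩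
  · simp only [card_filter_two_mul_dvd_two_mul, two_mul_add_one_div_two_mul,
      Nat.mul_div_mul_left _ _ two_pos]
    have : k / (2 * e) + m / (2 * e) ≤ (k + m) / (2 * e) := Nat.div_add_div_le_add_div
    omega
  · simp only [card_filter_dvd_two_mul_of_odd (odd_two_mul_add_one e)]
    have : 2 * k / (2 * e + 1) + (2 * m + 1) / (2 * e + 1) ≤ (2 * (k + m) + 1) / (2 * e + 1) :=
      (show 2 * k + (2 * m + 1) = 2 * (k + m) + 1 by ring) ▸ Nat.div_add_div_le_add_div
    omega

lemma qPoch_dvd (k m : ℕ) :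
    qPoch 2 (k + m) * qPoch 1 (2 * k) * qPoch 1 (2 * m + 1) * qPoch 1 k * qPoch 1 m ∣
      qPoch 1 (2 * (k + m) + 1) * qPoch 2 k * qPoch 2 m * qPoch 1 (k + m) := by
  simp only [← prod_qExps, ← Multiset.prod_add, ← Multiset.map_add]
  exact prod_X_pow_sub_one_dvd (card_filter_dvd_qExps_le k m)

lemma prod_one_add_X_pow_ne_zero (s : Finset ℕ) : ∏ i ∈ s, (1 + Polynomial.X ^ i : ℤ[X]) ≠ 0 :=
  prod_ne_zero_iff.2 fun i _ h => by simpa using congrArg (eval 1) h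

lemma negQPoch_dvd (k m : ℕ) :
    negQPoch (k + m) ∣ gauss (2 * (k + m) + 1) (2 * k) * negQPoch k * negQPoch m := by
  have hG := gauss_add_mul_qPoch (2 * k) (2 * m + 1)
  rw [show 2 * k + (2 * m + 1) = 2 * (k + m) + 1 by ring] at hG
  have hZ :
      qPoch 1 (2 * k) * qPoch 1 (2 * m + 1) * qPoch 1 k * qPoch 1 m * qPoch 1 (k + m) ≠ 0 := by
    simp only [ne_eq, mul_eq_zero, qPoch_ne_zero one_ne_zero, or_self, not_false_eq_true]
  rw [← mul_dvd_mul_iff_right hZ]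
  convert qPoch_dvd k m using 1
  · linear_combination (qPoch 1 (2 * k) * qPoch 1 (2 * m + 1) * qPoch 1 k * qPoch 1 m) *
      negQPoch_mul_qPoch_one (k + m)
  · linear_combination negQPoch k * negQPoch m * qPoch 1 k * qPoch 1 m * qPoch 1 (k + m) * hG
      + qPoch 1 (2 * (k + m) + 1) * negQPoch m * qPoch 1 m * qPoch 1 (k + m) *
        negQPoch_mul_qPoch_one k
      + qPoch 1 (2 * (k + m) + 1) * qPoch 2 k * qPoch 1 (k + m) * negQPoch_mul_qPoch_one m

lemma eval₂_qv_injective : Function.Injective (eval₂RingHom (Int.castRingHom Fq) qv) := by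
  have h : eval₂RingHom (Int.castRingHom Fq) qv
      = (algebraMap ℚ[X] Fq).comp (mapRingHom (Int.castRingHom ℚ)) :=
    Polynomial.ringHom_ext (fun a => by simp) (by simp [qv, RatFunc.algebraMap_X])
  rw [h]
  exact (RatFunc.algebraMap_injective ℚ).comp (map_injective _ Int.cast_injective)

theorem andrews_gessel_lemma_general (n k : ℕ) (hkn : k ≤ n) :
    ∃ P : Polynomial ℤ,
      (gauss (2 * n + 1) (2 * k)).eval₂ (Int.castRingHom Fq) qv *
          (∏ i ∈ Finset.Icc 1 k, (1 + qv ^ i)) /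
          (∏ i ∈ Finset.Icc (n - k + 1) n, (1 + qv ^ i)) =
        P.eval₂ (Int.castRingHom Fq) qv := by
  obtain ⟨m, rfl⟩ := Nat.exists_eq_add_of_le hkn
  have hsplit : negQPoch m * ∏ i ∈ Ioc m (k + m), (1 + Polynomial.X ^ i) = negQPoch (k + m) :=
    prod_Ioc_consecutive _ (Nat.zero_le m) (Nat.le_add_left m k)
  obtain ⟨P, hP⟩ : ∏ i ∈ Ioc m (k + m), (1 + Polynomial.X ^ i : ℤ[X]) ∣
      gauss (2 * (k + m) + 1) (2 * k) * negQPoch k := by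
    rw [← mul_dvd_mul_iff_left (prod_one_add_X_pow_ne_zero (Ioc 0 m)), ← negQPoch, hsplit,
      mul_comm]
    exact negQPoch_dvd k m
  refine ⟨P, ?_⟩
  set ev := eval₂RingHom (Int.castRingHom Fq) qv
  have hev : ∀ s : Finset ℕ, ev (∏ i ∈ s, (1 + Polynomial.X ^ i)) = ∏ i ∈ s, (1 + qv ^ i) := by
    simp [ev]
  have hden : ev (∏ i ∈ Ioc m (k + m), (1 + Polynomial.X ^ i)) ≠ 0 :=
    (map_ne_zero_iff ev eval₂_qv_injective).2 (prod_one_add_X_pow_ne_zero _)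
  rw [Nat.add_sub_cancel_left, Icc_add_one_left_eq_Ioc, show Icc 1 k = Ioc 0 k from rfl,
    ← hev, ← hev, ← negQPoch, ← coe_eval₂RingHom, ← map_mul, hP, map_mul,
    mul_div_cancel_left₀ _ hden]

theorem andrews_gessel_lemma (n k : ℕ) (hk : 1 ≤ k) (hkn : k ≤ n) :
    ∃ P : Polynomial ℤ,
      (gauss (2 * n + 1) (2 * k)).eval₂ (Int.castRingHom Fq) qv *
          (∏ i ∈ Finset.Icc 1 k, (1 + qv ^ i)) /
          (∏ i ∈ Finset.Icc (n - k + 1) n, (1 + qv ^ i)) =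
        P.eval₂ (Int.castRingHom Fq) qv :=
  andrews_gessel_lemma_general n k hkn
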